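/- arXiv:2111.03881 — 3 statements merged into one kernel-verified Lean document; each statement's English description precedes it below -/
import Mathlib

section
/- (Simulation Lemma) Call a trace t of Pr⟦PSC⟧ ṁ₀-to-ṁ if (q̄_Init, M_Init[ṁ ↦ ṁ₀]) →^t (q̄, M) for some q̄ and M with non-volatile memory component ṁ, and call a trace crashless if it contains no ↯ label. Suppose a relation R on (NVLoc → Val) × (NVLoc → Val) satisfies: (i) (ṁ_Init, ṁ_Init) ∈ R, where ṁ_Init is the all-zero non-volatile memory; and (ii) whenever (ṁ₀, ṁ♯₀) ∈ R, for every ṁ₀-to-ṁ crashless trace t of MGC[L]⟦PSC⟧ there exist a non-volatile memory ṁ♯ and an ṁ♯₀-to-ṁ♯ crashless trace t♯ of MGC[L♯]⟦PSC⟧ such that (ṁ, ṁ♯) ∈ R and h(t) = h(t♯). Then, assuming dom(L) = dom(L♯), L ⊑_MGC L♯. -/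
set_option maxHeartbeats 1000000
set_option linter.unusedVariables false

open Classical

noncomputable section

/-! ## Basic domains -/

abbrev Val := ℕ
abbrev NVLoc := ℕ
abbrev VLoc := ℕ
/-- Shared variables: disjoint union of non-volatile and volatile locations. -/
abbrev Var := NVLoc ⊕ VLoc
abbrev Reg := ℕ
/-- Method names (`main` is *not* a method name: it is represented by `none : Option F`). -/
abbrev F := ℕ
abbrev BlockID := ℕ

/-- Pointwise (classical) function update. -/
def upd {α : Type _} {β : Type _} (f : α → β) (a : α) (b : β) : α → β :=
  fun x => if x = a then b else f x

/-! ## Action labels -/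

inductive Lab : Type where
  | read (x : Var) (v : Val)
  | write (x : Var) (v : Val)
  | fl (x : NVLoc)
  | fo (x : NVLoc)
  | sf
  | sfL (X : Set NVLoc)
  | pb (X : Set NVLoc)
  | pe (X : Set NVLoc)
  | call (f : F) (φ : Reg → Val)
  | ret (f : F) (φ : Reg → Val)

def Lab.varset : Lab → Set Var
  | .read x _ => {x}
  | .write x _ => {x}
  | .fl x => {Sum.inl x}
  | .fo x => {Sum.inl x}
  | .sf => ∅
  | .sfL X => Sum.inl '' X
  | .pb X => Sum.inl '' X
  | .pe X => Sum.inl '' X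
  | .call _ _ => ∅
  | .ret _ _ => ∅

/-! ## The PSC memory system -/

/-- Persistence-buffer entries: writes `Wᵇ(v)` and flush-optimal markers `FO(τ)`. -/
inductive PEntry (Tid : Type) : Type where
  | w (b : Option BlockID) (v : Val)
  | fo (τ : Tid)

def PEntry.wVal {Tid : Type} : PEntry Tid → Option Val
  | .w _ v => some v
  | .fo _ => none

structure PSCState (Tid : Type) : Type where
  nvm : NVLoc → Val
  vm : VLoc → Val
  P : NVLoc → List (PEntry Tid)
  B : Tid → NVLoc → Option BlockID
  Bid : Set (BlockID × Set NVLoc)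

def MInit (Tid : Type) : PSCState Tid :=
  ⟨fun _ => 0, fun _ => 0, fun _ => [], fun _ _ => none, ∅⟩

/-- The value of the last (rightmost) write entry of a buffer, if any. -/
def lastWriteVal {Tid : Type} (p : List (PEntry Tid)) : Option Val :=
  (p.filterMap PEntry.wVal).getLast?

/-- The most recent value of a variable. -/
def PSCState.readVal {Tid : Type} (M : PSCState Tid) : Var → Val
  | Sum.inl x => (lastWriteVal (M.P x)).getD (M.nvm x)
  | Sum.inr y => M.vm y

inductive PSCLabel (Tid : Type) : Type where
  | act (τ : Tid) (l : Lab)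
  | per
  | crash

def PSCLabel.varset {Tid : Type} : PSCLabel Tid → Set Var
  | .act _ l => l.varset
  | .per => ∅
  | .crash => ∅

inductive PSCStep (Tid : Type) : PSCState Tid → PSCLabel Tid → PSCState Tid → Prop where
  | vwrite : ∀ (M : PSCState Tid) (τ : Tid) (x : VLoc) (v : Val),
      PSCStep Tid M (.act τ (.write (Sum.inr x) v)) { M with vm := upd M.vm x v }
  | nvwrite : ∀ (M : PSCState Tid) (τ : Tid) (x : NVLoc) (v : Val),
      PSCStep Tid M (.act τ (.write (Sum.inl x) v))
        { M with P := upd M.P x (M.P x ++ [PEntry.w (M.B τ x) v]) }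
  | read : ∀ (M : PSCState Tid) (τ : Tid) (x : Var) (v : Val),
      M.readVal x = v → PSCStep Tid M (.act τ (.read x v)) M
  | flush : ∀ (M : PSCState Tid) (τ : Tid) (x : NVLoc),
      M.P x = [] → PSCStep Tid M (.act τ (.fl x)) M
  | flushOpt : ∀ (M : PSCState Tid) (τ : Tid) (x : NVLoc),
      PSCStep Tid M (.act τ (.fo x)) { M with P := upd M.P x (M.P x ++ [PEntry.fo τ]) }
  | sfence : ∀ (M : PSCState Tid) (τ : Tid),
      (∀ x : NVLoc, PEntry.fo τ ∉ M.P x) → PSCStep Tid M (.act τ .sf) M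
  | sfenceL : ∀ (M : PSCState Tid) (τ : Tid) (X : Set NVLoc),
      (∀ x ∈ X, PEntry.fo τ ∉ M.P x) → PSCStep Tid M (.act τ (.sfL X)) M
  | beginPB : ∀ (M : PSCState Tid) (τ : Tid) (X : Set NVLoc) (b : BlockID),
      (∀ x ∈ X, M.B τ x = none) →
      (∀ Y : Set NVLoc, (b, Y) ∉ M.Bid) →
      PSCStep Tid M (.act τ (.pb X))
        { M with
          B := upd M.B τ (fun x => if x ∈ X then some b else M.B τ x),
          Bid := insert (b, X) M.Bid }
  | endPB : ∀ (M : PSCState Tid) (τ : Tid) (X : Set NVLoc),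
      PSCStep Tid M (.act τ (.pe X))
        { M with B := upd M.B τ (fun x => if x ∈ X then none else M.B τ x) }
  | persist : ∀ (M : PSCState Tid) (p P' : NVLoc → List (PEntry Tid)),
      (∀ x, M.P x = p x ++ P' x) →
      (∀ b : BlockID, (∃ x v, PEntry.w (some b) v ∈ p x) →
        (∀ (τ : Tid) (x : NVLoc), M.B τ x ≠ some b) ∧
        (∀ x v, PEntry.w (some b) v ∉ P' x)) →
      PSCStep Tid M .per
        { M with
          nvm := fun x => (lastWriteVal (p x)).getD (M.nvm x),
          P := P' }
  | crash : ∀ (M : PSCState Tid),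
      PSCStep Tid M .crash { MInit Tid with nvm := M.nvm }

/-! ## Programs -/

inductive Exp : Type where
  | reg (r : Reg)
  | val (v : Val)
  | add (e₁ e₂ : Exp)
  | mod (e₁ e₂ : Exp)
  | eq (e₁ e₂ : Exp)
  | ne (e₁ e₂ : Exp)

def Exp.eval (φ : Reg → Val) : Exp → Val
  | .reg r => φ r
  | .val v => v
  | .add e₁ e₂ => e₁.eval φ + e₂.eval φ
  | .mod e₁ e₂ => e₁.eval φ % e₂.eval φ
  | .eq e₁ e₂ => if e₁.eval φ = e₂.eval φ then 1 else 0
  | .ne e₁ e₂ => if e₁.eval φ = e₂.eval φ then 0 else 1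

inductive Instr : Type where
  | assign (r : Reg) (e : Exp)
  | ifgoto (e : Exp) (ns : List ℕ)
  | havoc
  | store (x : Var) (e : Exp)
  | load (r : Reg) (x : Var)
  | fl (x : NVLoc)
  | fo (x : NVLoc)
  | sfence
  | sfenceL (X : Set NVLoc)
  | beginPB (X : Set NVLoc)
  | endPB (X : Set NVLoc)
  | callM (f : F)
  | ret

def Instr.varset : Instr → Set Var
  | .store x _ => {x}
  | .load _ x => {x}
  | .fl x => {Sum.inl x}
  | .fo x => {Sum.inl x}
  | .sfenceL X => Sum.inl '' X
  | .beginPB X => Sum.inl '' X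
  | .endPB X => Sum.inl '' X
  | _ => ∅

/-- An instruction sequence: a map from `{0, …, len}` to instructions. -/
structure InstrSeq : Type where
  len : ℕ
  code : ℕ → Instr

def InstrSeq.locs (I : InstrSeq) : Set Var :=
  { x | ∃ pc ≤ I.len, x ∈ (I.code pc).varset }

/-- Flat (call-free) instruction sequences. -/
def InstrSeq.Flat (I : InstrSeq) : Prop :=
  ∀ pc ≤ I.len, ∀ f : F, I.code pc ≠ .callM f

/-- The LTS of an instruction sequence (label `none` is the silent label ε). -/
inductive IStep (I : InstrSeq) : ℕ × (Reg → Val) → Option Lab → ℕ × (Reg → Val) → Prop where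
  | assign : ∀ (pc : ℕ) (φ : Reg → Val) (r : Reg) (e : Exp),
      pc ≤ I.len → I.code pc = .assign r e →
      IStep I (pc, φ) none (pc + 1, upd φ r (e.eval φ))
  | ifgotoT : ∀ (pc : ℕ) (φ : Reg → Val) (e : Exp) (ns : List ℕ) (pc' : ℕ),
      pc ≤ I.len → I.code pc = .ifgoto e ns → e.eval φ ≠ 0 → pc' ∈ ns →
      IStep I (pc, φ) none (pc', φ)
  | ifgotoF : ∀ (pc : ℕ) (φ : Reg → Val) (e : Exp) (ns : List ℕ),
      pc ≤ I.len → I.code pc = .ifgoto e ns → e.eval φ = 0 →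
      IStep I (pc, φ) none (pc + 1, φ)
  | havoc : ∀ (pc : ℕ) (φ φ' : Reg → Val),
      pc ≤ I.len → I.code pc = .havoc →
      IStep I (pc, φ) none (pc + 1, φ')
  | store : ∀ (pc : ℕ) (φ : Reg → Val) (x : Var) (e : Exp),
      pc ≤ I.len → I.code pc = .store x e →
      IStep I (pc, φ) (some (.write x (e.eval φ))) (pc + 1, φ)
  | load : ∀ (pc : ℕ) (φ : Reg → Val) (r : Reg) (x : Var) (v : Val),
      pc ≤ I.len → I.code pc = .load r x →
      IStep I (pc, φ) (some (.read x v)) (pc + 1, upd φ r v)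
  | fl : ∀ (pc : ℕ) (φ : Reg → Val) (x : NVLoc),
      pc ≤ I.len → I.code pc = .fl x →
      IStep I (pc, φ) (some (.fl x)) (pc + 1, φ)
  | fo : ∀ (pc : ℕ) (φ : Reg → Val) (x : NVLoc),
      pc ≤ I.len → I.code pc = .fo x →
      IStep I (pc, φ) (some (.fo x)) (pc + 1, φ)
  | sfence : ∀ (pc : ℕ) (φ : Reg → Val),
      pc ≤ I.len → I.code pc = .sfence →
      IStep I (pc, φ) (some .sf) (pc + 1, φ)
  | sfenceL : ∀ (pc : ℕ) (φ : Reg → Val) (X : Set NVLoc),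
      pc ≤ I.len → I.code pc = .sfenceL X →
      IStep I (pc, φ) (some (.sfL X)) (pc + 1, φ)
  | beginPB : ∀ (pc : ℕ) (φ : Reg → Val) (X : Set NVLoc),
      pc ≤ I.len → I.code pc = .beginPB X →
      IStep I (pc, φ) (some (.pb X)) (pc + 1, φ)
  | endPB : ∀ (pc : ℕ) (φ : Reg → Val) (X : Set NVLoc),
      pc ≤ I.len → I.code pc = .endPB X →
      IStep I (pc, φ) (some (.pe X)) (pc + 1, φ)

/-- A sequential program: a `main` plus an implementation of every method, all flat. -/
structure SeqProg : Type where
  main : InstrSeq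
  meth : F → InstrSeq
  flat : ∀ f, (meth f).Flat

/-- State of a sequential program: program counter, local store,
stored program counter, and active method (`none` = main). -/
structure SState : Type where
  pc : ℕ
  φ : Reg → Val
  pcs : Option ℕ
  fm : Option F

def SInit : SState := ⟨0, fun _ => 0, none, none⟩

def SeqProg.cur (S : SeqProg) (q : SState) : InstrSeq :=
  match q.fm with
  | none => S.main
  | some f => S.meth f

inductive SeqStep (S : SeqProg) : SState → Option Lab → SState → Prop where
  | normal : ∀ (q : SState) (l : Option Lab) (pc' : ℕ) (φ' : Reg → Val),
      IStep (S.cur q) (q.pc, q.φ) l (pc', φ') →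
      SeqStep S q l ⟨pc', φ', q.pcs, q.fm⟩
  | callStep : ∀ (q : SState) (f : F),
      q.fm = none → q.pc ≤ S.main.len → S.main.code q.pc = .callM f →
      SeqStep S q (some (.call f q.φ)) ⟨0, q.φ, some (q.pc + 1), some f⟩
  | retStep : ∀ (q : SState) (f : F) (n : ℕ),
      q.fm = some f → q.pcs = some n →
      q.pc ≤ (S.meth f).len → (S.meth f).code q.pc = .ret →
      SeqStep S q (some (.ret f q.φ)) ⟨n, q.φ, none, none⟩
  | sfLoop : ∀ (q : SState), SeqStep S q (some .sf) q

/-- A concurrent program: one sequential program per thread, same method implementations. -/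
structure CProg (Tid : Type) : Type where
  prog : Tid → SeqProg
  same : ∀ τ π : Tid, (prog τ).meth = (prog π).meth

inductive CLabel (Tid : Type) : Type where
  | act (τ : Tid) (l : Option Lab)
  | crash

/-- The LTS of a concurrent program. -/
inductive CStep (Tid : Type) (Pr : CProg Tid) :
    (Tid → SState) → CLabel Tid → (Tid → SState) → Prop where
  | act : ∀ (q : Tid → SState) (τ : Tid) (l : Option Lab) (q' : SState),
      SeqStep (Pr.prog τ) (q τ) l q' →
      CStep Tid Pr q (.act τ l) (upd q τ q')
  | crash : ∀ (q : Tid → SState), CStep Tid Pr q .crash (fun _ => SInit)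

/-! ## The combined system `Pr⟦PSC⟧` -/

inductive SysLabel (Tid : Type) : Type where
  | act (τ : Tid) (l : Option Lab)
  | per
  | crash

abbrev Config (Tid : Type) := (Tid → SState) × PSCState Tid

inductive SysStep (Tid : Type) (Pr : CProg Tid) :
    Config Tid → SysLabel Tid → Config Tid → Prop where
  | sync : ∀ (q q' : Tid → SState) (M M' : PSCState Tid) (τ : Tid) (l : Lab),
      CStep Tid Pr q (.act τ (some l)) q' →
      PSCStep Tid M (.act τ l) M' →
      SysStep Tid Pr (q, M) (.act τ (some l)) (q', M')
  | eps : ∀ (q q' : Tid → SState) (M : PSCState Tid) (τ : Tid),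
      CStep Tid Pr q (.act τ none) q' →
      SysStep Tid Pr (q, M) (.act τ none) (q', M)
  | per : ∀ (q : Tid → SState) (M M' : PSCState Tid),
      PSCStep Tid M .per M' →
      SysStep Tid Pr (q, M) .per (q, M')
  | crash : ∀ (q q' : Tid → SState) (M M' : PSCState Tid),
      CStep Tid Pr q .crash q' →
      PSCStep Tid M .crash M' →
      SysStep Tid Pr (q, M) .crash (q', M')

/-- `Reach Tid Pr c t c'` : from configuration `c`, the trace `t` leads to `c'`. -/
inductive Reach (Tid : Type) (Pr : CProg Tid) :
    Config Tid → List (SysLabel Tid) → Config Tid → Prop where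
  | refl : ∀ c, Reach Tid Pr c [] c
  | snoc : ∀ (c : Config Tid) (t : List (SysLabel Tid)) (c' c'' : Config Tid)
      (α : SysLabel Tid),
      Reach Tid Pr c t c' → SysStep Tid Pr c' α c'' →
      Reach Tid Pr c (t ++ [α]) c''

def CInit (Tid : Type) : Config Tid := (fun _ => SInit, MInit Tid)

/-! ## Histories -/

def SysLabel.isHist {Tid : Type} (G : Set F) : SysLabel Tid → Prop
  | .act _ (some (.call f _)) => f ∈ G
  | .act _ (some (.ret f _)) => f ∈ G
  | .act _ (some .sf) => True
  | .crash => True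
  | _ => False

/-- The history of a trace w.r.t. a set of methods `G`. -/
def histG {Tid : Type} (G : Set F) : List (SysLabel Tid) → List (SysLabel Tid)
  | [] => []
  | α :: t => if α.isHist G then α :: histG G t else histG G t

/-- The set of histories (w.r.t. `G`) of a program. -/
def HSetG (Tid : Type) (G : Set F) (Pr : CProg Tid) : Set (List (SysLabel Tid)) :=
  { h | ∃ t c, Reach Tid Pr (CInit Tid) t c ∧ histG G t = h }

def HSet (Tid : Type) (Pr : CProg Tid) : Set (List (SysLabel Tid)) :=
  HSetG Tid Set.univ Pr

def crashless {Tid : Type} (t : List (SysLabel Tid)) : Prop :=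
  SysLabel.crash ∉ t

/-! ## Libraries, safety, and plugging -/

structure Lib : Type where
  dom : Set F
  impl : F → InstrSeq
  flat : ∀ f, (impl f).Flat

def Lib.locs (L : Lib) : Set Var :=
  ⋃ f ∈ L.dom, (L.impl f).locs

/-- The locations used by the client of a library implementing the methods in `G`. -/
def clientLocs (Tid : Type) (G : Set F) (Pr : CProg Tid) : Set Var :=
  (⋃ τ : Tid, ((Pr.prog τ).main).locs) ∪ ⋃ τ : Tid, ⋃ f ∈ Gᶜ, ((Pr.prog τ).meth f).locs

def Lib.safeFor {Tid : Type} (L : Lib) (Pr : CProg Tid) : Prop :=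
  L.locs ∩ clientLocs Tid L.dom Pr = ∅

def defaultSeq : InstrSeq := ⟨0, fun _ => .ret⟩

theorem defaultSeq_flat : defaultSeq.Flat := by
  intro pc _ f h
  exact Instr.noConfusion h

def plugMeth {Tid : Type} (Pr : CProg Tid) (L : Lib) (τ : Tid) (f : F) : InstrSeq :=
  if f ∈ L.dom then L.impl f else (Pr.prog τ).meth f

theorem plugMeth_flat {Tid : Type} (Pr : CProg Tid) (L : Lib) (τ : Tid) (f : F) :
    (plugMeth Pr L τ f).Flat := by
  unfold plugMeth
  by_cases h : f ∈ L.dom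
  · rw [if_pos h]; exact L.flat f
  · rw [if_neg h]; exact (Pr.prog τ).flat f

/-- `plug Pr L` is `Pr[L]` : the program `Pr` using the library `L`. -/
def plug {Tid : Type} (Pr : CProg Tid) (L : Lib) : CProg Tid where
  prog τ := ⟨(Pr.prog τ).main, plugMeth Pr L τ, plugMeth_flat Pr L τ⟩
  same := by
    intro τ π
    funext f
    show plugMeth Pr L τ f = plugMeth Pr L π f
    unfold plugMeth
    by_cases h : f ∈ L.dom
    · rw [if_pos h, if_pos h]
    · rw [if_neg h, if_neg h, congrFun (Pr.same τ π) f]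

/-- `L ⊑_MGC L♯` : `L` refines `L♯` w.r.t. the most general client `MGC`. -/
def refines (Tid : Type) (L Lsharp : Lib) (MGC : CProg Tid) : Prop :=
  L.dom = Lsharp.dom ∧ HSet Tid (plug MGC L) ⊆ HSet Tid (plug MGC Lsharp)

/-- `Pr` correctly calls `L` w.r.t. `MGC`. -/
def correctlyCalls (Tid : Type) (Pr : CProg Tid) (L : Lib) (MGC : CProg Tid) : Prop :=
  HSetG Tid L.dom (plug Pr L) ⊆ HSetG Tid L.dom (plug MGC L)

/-! ## Separation, restriction and merging of PSC states -/

def separates {Tid : Type} (X : Set NVLoc) (M : PSCState Tid) : Prop :=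
  ∀ b Y, (b, Y) ∈ M.Bid → Y ⊆ X ∨ Y ⊆ Xᶜ

/-- The non-volatile part of a set of variables. -/
def nvPart (X : Set Var) : Set NVLoc := { x | Sum.inl x ∈ X }

/-- The restriction `M|X` of a PSC state to a set of variables. -/
def PSCState.restrict {Tid : Type} (M : PSCState Tid) (X : Set Var) : PSCState Tid where
  nvm := fun x => if Sum.inl x ∈ X then M.nvm x else 0
  vm := fun y => if Sum.inr y ∈ X then M.vm y else 0
  P := fun x => if Sum.inl x ∈ X then M.P x else []
  B := fun τ x => if Sum.inl x ∈ X then M.B τ x else none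
  Bid := { p | p ∈ M.Bid ∧ ∀ y ∈ p.2, Sum.inl y ∈ X }

/-- The merge `M₁|X₁ ⊎ M₂|X₂` of two PSC states w.r.t. disjoint sets of variables. -/
def mergeM {Tid : Type} (M₁ : PSCState Tid) (X₁ : Set Var)
    (M₂ : PSCState Tid) (X₂ : Set Var) : PSCState Tid where
  nvm := fun x =>
    if Sum.inl x ∈ X₁ then M₁.nvm x else if Sum.inl x ∈ X₂ then M₂.nvm x else 0
  vm := fun y =>
    if Sum.inr y ∈ X₁ then M₁.vm y else if Sum.inr y ∈ X₂ then M₂.vm y else 0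
  P := fun x =>
    if Sum.inl x ∈ X₁ then M₁.P x else if Sum.inl x ∈ X₂ then M₂.P x else []
  B := fun τ x =>
    if Sum.inl x ∈ X₁ then M₁.B τ x else if Sum.inl x ∈ X₂ then M₂.B τ x else none
  Bid := { p | p ∈ M₁.Bid ∧ ∀ y ∈ p.2, Sum.inl y ∈ X₁ } ∪
         { p | p ∈ M₂.Bid ∧ ∀ y ∈ p.2, Sum.inl y ∈ X₂ }

/-! ## STATEMENT 3: the simulation lemma -/

/-- `mTo Tid Pr m0 m t` : `t` is an `m0`-to-`m` trace of `Pr⟦PSC⟧`. -/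
def mTo (Tid : Type) (Pr : CProg Tid) (m0 m : NVLoc → Val)
    (t : List (SysLabel Tid)) : Prop :=
  ∃ (q : Tid → SState) (M : PSCState Tid),
    Reach Tid Pr ((fun _ => SInit), { MInit Tid with nvm := m0 }) t (q, M) ∧
    M.nvm = m

/-! A trace of `Pr⟦PSC⟧` splits at its crashes into crashless epochs, each starting from
`M_Init` with the non-volatile memory left behind by the previous epoch. Simulating the epochs
one after another, `R` relates the two non-volatile memories at every crash, and a crash keeps
exactly the non-volatile memory on both sides, so the next epoch starts from `R`-related states
again. -/

section CrashSimulation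

variable {Tid : Type} {Pr Prs : CProg Tid}

theorem Reach.append {c c' c'' : Config Tid} {t u : List (SysLabel Tid)}
    (h₁ : Reach Tid Pr c t c') (h₂ : Reach Tid Pr c' u c'') :
    Reach Tid Pr c (t ++ u) c'' := by
  induction h₂ with
  | refl => simpa using h₁
  | snoc u _ _ α _ hstep ih => simpa using ih.snoc _ _ _ _ _ hstep

theorem histG_append (G : Set F) (t u : List (SysLabel Tid)) :
    histG G (t ++ u) = histG G t ++ histG G u := by
  induction t with
  | nil => rfl
  | cons α t ih => by_cases h : α.isHist G <;> simp [histG, h, ih]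

theorem crashless_append_singleton {t : List (SysLabel Tid)} {α : SysLabel Tid}
    (ht : crashless t) (hα : α ≠ .crash) : crashless (t ++ [α]) := by
  simpa [crashless, eq_comm] using ⟨ht, hα⟩

def initConfig (Tid : Type) (m₀ : NVLoc → Val) : Config Tid :=
  (fun _ => SInit, { MInit Tid with nvm := m₀ })

theorem SysStep.crash_iff {c c' : Config Tid} :
    SysStep Tid Pr c .crash c' ↔ c' = initConfig Tid c.2.nvm := by
  constructor
  · rintro (_ | _ | _ | ⟨_, _, _, _, ⟨⟩, ⟨⟩⟩)
    rfl
  · rintro rfl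
    exact SysStep.crash _ _ _ _ (CStep.crash _) (PSCStep.crash _)

/-- Condition (ii) of the simulation lemma, for histories taken w.r.t. the methods `G`. -/
def CrashlessSimulation (Tid : Type) (G : Set F) (Pr Prs : CProg Tid)
    (R : (NVLoc → Val) → (NVLoc → Val) → Prop) : Prop :=
  ∀ m0 ms0, R m0 ms0 →
    ∀ t m, mTo Tid Pr m0 m t → crashless t →
    ∃ ms ts, mTo Tid Prs ms0 ms ts ∧ crashless ts ∧ R m ms ∧ histG G t = histG G ts

namespace CrashlessSimulation

variable {G : Set F} {R : (NVLoc → Val) → (NVLoc → Val) → Prop}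

theorem extend (hsim : CrashlessSimulation Tid G Pr Prs R) {m₀ ms₀ : NVLoc → Val}
    (hR : R m₀ ms₀) {ts₀ v : List (SysLabel Tid)} {c : Config Tid}
    (hts₀ : Reach Tid Prs (CInit Tid) ts₀ (initConfig Tid ms₀))
    (hv : Reach Tid Pr (initConfig Tid m₀) v c) (hcl : crashless v) :
    ∃ ts c', Reach Tid Prs (CInit Tid) ts c' ∧ R c.2.nvm c'.2.nvm ∧
      histG G ts = histG G ts₀ ++ histG G v := by
  obtain ⟨_, vs, ⟨qs, Ms, hvs, rfl⟩, -, hRs, hhist⟩ :=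
    hsim m₀ ms₀ hR v c.2.nvm ⟨c.1, c.2, hv, rfl⟩ hcl
  exact ⟨ts₀ ++ vs, (qs, Ms), hts₀.append hvs, hRs, by rw [histG_append, hhist]⟩

/-- `ts₀` simulates the part of `t` up to its last crash, `v` is the crashless rest. -/
theorem exists_last_epoch (hinit : R (fun _ => 0) (fun _ => 0))
    (hsim : CrashlessSimulation Tid G Pr Prs R) {t : List (SysLabel Tid)} {c : Config Tid}
    (h : Reach Tid Pr (CInit Tid) t c) :
    ∃ m₀ ms₀ ts₀ v, R m₀ ms₀ ∧ Reach Tid Prs (CInit Tid) ts₀ (initConfig Tid ms₀) ∧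
      Reach Tid Pr (initConfig Tid m₀) v c ∧ crashless v ∧
      histG G t = histG G ts₀ ++ histG G v := by
  induction h with
  | refl => exact ⟨_, _, [], [], hinit, .refl _, .refl _, List.not_mem_nil, rfl⟩
  | snoc t c₂ c₃ α _ hstep ih =>
    obtain ⟨m₀, ms₀, ts₀, v, hR, hts₀, hv, hcl, hhist⟩ := ih
    by_cases hα : α = .crash
    · subst hα
      obtain rfl := SysStep.crash_iff.1 hstep
      obtain ⟨ts, c', hts, hR', hts_hist⟩ := hsim.extend hR hts₀ hv hcl
      refine ⟨_, _, ts ++ [.crash], [], hR', hts.snoc _ _ _ _ _ (SysStep.crash_iff.2 rfl),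
        .refl _, List.not_mem_nil, ?_⟩
      simp [histG_append, histG, SysLabel.isHist, hhist, hts_hist]
    · refine ⟨m₀, ms₀, ts₀, v ++ [α], hR, hts₀, hv.snoc _ _ _ _ _ hstep,
        crashless_append_singleton hcl hα, ?_⟩
      rw [histG_append, histG_append, hhist, List.append_assoc]

theorem HSetG_subset (hinit : R (fun _ => 0) (fun _ => 0))
    (hsim : CrashlessSimulation Tid G Pr Prs R) : HSetG Tid G Pr ⊆ HSetG Tid G Prs := by
  rintro _ ⟨t, c, h, rfl⟩
  obtain ⟨_, _, ts₀, v, hR, hts₀, hv, hcl, hhist⟩ := exists_last_epoch hinit hsim h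
  obtain ⟨ts, c', hts, -, hts_hist⟩ := hsim.extend hR hts₀ hv hcl
  exact ⟨ts, c', hts, hts_hist.trans hhist.symm⟩

end CrashlessSimulation

end CrashSimulation

theorem simulation_general (Tid : Type)
    (L Ls : Lib) (MGC : CProg Tid)
    (hdom : L.dom = Ls.dom)
    (R : (NVLoc → Val) → (NVLoc → Val) → Prop)
    (hinit : R (fun _ => 0) (fun _ => 0))
    (hsim : ∀ m0 ms0, R m0 ms0 →
      ∀ t m, mTo Tid (plug MGC L) m0 m t → crashless t →
      ∃ ms ts, mTo Tid (plug MGC Ls) ms0 ms ts ∧ crashless ts ∧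
        R m ms ∧ histG Set.univ t = histG Set.univ ts) :
    refines Tid L Ls MGC :=
  ⟨hdom, CrashlessSimulation.HSetG_subset hinit hsim⟩

theorem simulation (Tid : Type) [Fintype Tid]
    (L Ls : Lib) (MGC : CProg Tid)
    (hs1 : L.safeFor MGC) (hs2 : Ls.safeFor MGC)
    (hdom : L.dom = Ls.dom)
    (R : (NVLoc → Val) → (NVLoc → Val) → Prop)
    (hinit : R (fun _ => 0) (fun _ => 0))
    (hsim : ∀ m0 ms0, R m0 ms0 →
      ∀ t m, mTo Tid (plug MGC L) m0 m t → crashless t →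
      ∃ ms ts, mTo Tid (plug MGC Ls) ms0 ms ts ∧ crashless ts ∧
        R m ms ∧ histG Set.univ t = histG Set.univ ts) :
    refines Tid L Ls MGC :=
  simulation_general Tid L Ls MGC hdom R hinit hsim
end
end

section
/- (Reachable states are separated) Let L be a library safe for a concurrent program Pr. For every state (q̄, M) reachable in Pr[L]⟦PSC⟧, both locs(L) ∩ NVLoc and locs_{dom(L)}(Pr) ∩ NVLoc separate the PSC state M. -/
set_option maxHeartbeats 1000000
set_option linter.unusedVariables false

open Classical

noncomputable section

/-! Block sets only enter `Bid` through `beginPB Ẋ` instructions, and the locations `Ẋ` of such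
an instruction belong to the code segment executing it: either a library method, or the client's
`main` or one of its own methods. So every block lies inside `locs(L)` or inside the client's
locations, and safety makes these two sets disjoint. -/

def PSCState.BlocksSatisfy {Tid : Type} (P : Set NVLoc → Prop) (M : PSCState Tid) : Prop :=
  ∀ b Y, (b, Y) ∈ M.Bid → P Y

theorem separates_of_blocksSatisfy {Tid : Type} {X₁ X₂ : Set NVLoc} {M : PSCState Tid}
    (hd : Disjoint X₁ X₂) (h : M.BlocksSatisfy fun Y => Y ⊆ X₁ ∨ Y ⊆ X₂) :
    separates X₁ M :=
  fun b Y hY => (h b Y hY).imp_right fun h₂ => h₂.trans hd.subset_compl_left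

theorem IStep.varset_subset_locs {I : InstrSeq} {s s' : ℕ × (Reg → Val)} {l : Lab}
    (h : IStep I s (some l) s') : l.varset ⊆ I.locs := by
  cases h <;> exact fun x hx => ⟨_, ‹_›, by simp_all [Instr.varset, Lab.varset]⟩

theorem SeqStep.varset_subset_locs {S : SeqProg} {q q' : SState} {l : Lab}
    (h : SeqStep S q (some l) q') : l.varset ⊆ (S.cur q).locs := by
  cases h with
  | normal _ _ _ hI => exact hI.varset_subset_locs
  | _ => simp [Lab.varset]

theorem plug_cur_locs_subset {Tid : Type} (Pr : CProg Tid) (L : Lib) (τ : Tid) (q : SState) :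
    (((plug Pr L).prog τ).cur q).locs ⊆ L.locs ∨
      (((plug Pr L).prog τ).cur q).locs ⊆ clientLocs Tid L.dom Pr := by
  rcases hfm : q.fm with _ | f
  · refine Or.inr fun x hx => Or.inl (Set.mem_iUnion.2 ⟨τ, ?_⟩)
    simpa [SeqProg.cur, hfm, plug] using hx
  · by_cases hf : f ∈ L.dom
    · refine Or.inl fun x hx => Set.mem_biUnion hf ?_
      simpa [SeqProg.cur, hfm, plug, plugMeth, hf] using hx
    · refine Or.inr fun x hx => Or.inr (Set.mem_iUnion.2 ⟨τ, Set.mem_biUnion hf ?_⟩)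
      simpa [SeqProg.cur, hfm, plug, plugMeth, hf] using hx

theorem plug_pb_subset {Tid : Type} {Pr : CProg Tid} {L : Lib} {τ : Tid} {q q' : SState}
    {X : Set NVLoc} (h : SeqStep ((plug Pr L).prog τ) q (some (.pb X)) q') :
    X ⊆ nvPart L.locs ∨ X ⊆ nvPart (clientLocs Tid L.dom Pr) := by
  have hX : Sum.inl '' X ⊆ (((plug Pr L).prog τ).cur q).locs := h.varset_subset_locs
  exact (plug_cur_locs_subset Pr L τ q).imp (fun h' => Set.image_subset_iff.1 (hX.trans h'))
    (fun h' => Set.image_subset_iff.1 (hX.trans h'))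

section Invariant

variable {Tid : Type} {Pr : CProg Tid} {P : Set NVLoc → Prop}

theorem SysStep.blocksSatisfy
    (hP : ∀ τ q q' X, SeqStep (Pr.prog τ) q (some (.pb X)) q' → P X)
    {c c' : Config Tid} {α : SysLabel Tid} (h : SysStep Tid Pr c α c')
    (hc : c.2.BlocksSatisfy P) : c'.2.BlocksSatisfy P := by
  cases h with
  | sync _ _ _ _ τ _ hq hM =>
    cases hM with
    | beginPB =>
      rintro b Y (hnew | hold)
      · obtain ⟨-, rfl⟩ := Prod.mk.inj hnew
        cases hq with
        | act _ _ _ hs => exact hP τ _ _ Y hs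
      · exact hc b Y hold
    | _ => exact hc
  | eps => exact hc
  | per _ _ _ hM => cases hM; exact hc
  | crash _ _ _ _ _ hM => cases hM; exact fun _ _ h => h.elim

theorem Reach.blocksSatisfy
    (hP : ∀ τ q q' X, SeqStep (Pr.prog τ) q (some (.pb X)) q' → P X)
    {c c' : Config Tid} {t : List (SysLabel Tid)} (h : Reach Tid Pr c t c')
    (hc : c.2.BlocksSatisfy P) : c'.2.BlocksSatisfy P := by
  induction h with
  | refl => exact hc
  | snoc _ _ _ _ _ hs ih => exact hs.blocksSatisfy hP ih

end Invariant

theorem reachable_separates_general (Tid : Type)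
    (L : Lib) (Pr : CProg Tid) (hsafe : L.safeFor Pr)
    (t : List (SysLabel Tid)) (q : Tid → SState) (M : PSCState Tid)
    (hreach : Reach Tid (plug Pr L) (CInit Tid) t (q, M)) :
    separates (nvPart L.locs) M ∧
    separates (nvPart (clientLocs Tid L.dom Pr)) M := by
  have hblocks : M.BlocksSatisfy
      fun Y => Y ⊆ nvPart L.locs ∨ Y ⊆ nvPart (clientLocs Tid L.dom Pr) :=
    hreach.blocksSatisfy (fun _ _ _ _ => plug_pb_subset) fun _ _ h => h.elim
  have hd : Disjoint (nvPart L.locs) (nvPart (clientLocs Tid L.dom Pr)) :=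
    (Set.disjoint_iff_inter_eq_empty.2 hsafe).preimage Sum.inl
  exact ⟨separates_of_blocksSatisfy hd hblocks,
    separates_of_blocksSatisfy hd.symm fun b Y hY => (hblocks b Y hY).symm⟩

theorem reachable_separates (Tid : Type) [Fintype Tid]
    (L : Lib) (Pr : CProg Tid) (hsafe : L.safeFor Pr)
    (t : List (SysLabel Tid)) (q : Tid → SState) (M : PSCState Tid)
    (hreach : Reach Tid (plug Pr L) (CInit Tid) t (q, M)) :
    separates (nvPart L.locs) M ∧
    separates (nvPart (clientLocs Tid L.dom Pr)) M :=
  reachable_separates_general Tid L Pr hsafe t q M hreach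
end
end

section
/- (Separation is preserved by local steps) If Ẋ ⊆ NVLoc separates a PSC state M₁, and M₁ →^{α} M₂ is a transition of PSC whose label α satisfies varset(α) ⊆ Ẋ, then Ẋ also separates M₂. -/
set_option maxHeartbeats 1000000
set_option linter.unusedVariables false

open Classical

noncomputable section

theorem PSCStep.mem_Bid_or_image_subset_varset {Tid : Type} {M₁ M₂ : PSCState Tid}
    {α : PSCLabel Tid} (hstep : PSCStep Tid M₁ α M₂) {b : BlockID} {Y : Set NVLoc}
    (hY : (b, Y) ∈ M₂.Bid) :
    (b, Y) ∈ M₁.Bid ∨ Sum.inl '' Y ⊆ α.varset := by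
  cases hstep with
  | beginPB M τ X b' =>
    rcases Set.mem_insert_iff.1 hY with hnew | hold
    · obtain ⟨-, rfl⟩ := Prod.mk.inj hnew
      exact Or.inr subset_rfl
    · exact Or.inl hold
  | crash => simp [MInit] at hY
  | _ => exact Or.inl hY

theorem separates_preserved_general (Tid : Type)
    (X : Set NVLoc) (M₁ M₂ : PSCState Tid) (α : PSCLabel Tid)
    (hsep : separates X M₁) (hvar : α.varset ⊆ Sum.inl '' X)
    (hstep : PSCStep Tid M₁ α M₂) :
    separates X M₂ := by
  intro b Y hY
  rcases hstep.mem_Bid_or_image_subset_varset hY with hold | hnew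
  · exact hsep b Y hold
  · exact Or.inl ((Set.image_subset_image_iff Sum.inl_injective).1 (hnew.trans hvar))

theorem separates_preserved (Tid : Type) [Fintype Tid]
    (X : Set NVLoc) (M₁ M₂ : PSCState Tid) (α : PSCLabel Tid)
    (hsep : separates X M₁) (hvar : α.varset ⊆ Sum.inl '' X)
    (hstep : PSCStep Tid M₁ α M₂) :
    separates X M₂ :=
  separates_preserved_general Tid X M₁ M₂ α hsep hvar hstep
end
end
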